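/- In the game F-Wythoff, the set of positions with Sprague-Grundy value 1 is exactly {(0,1)} ∪ {(⌊φn⌋+2, ⌊φ²n⌋+2) : n ≥ 0} (pairs unordered), where φ = (1+√5)/2. -/

import Mathlib

noncomputable def phi : ℝ := (1 + Real.sqrt 5) / 2

noncomputable def fl (n : ℕ) : ℕ := ⌊phi * n⌋₊

noncomputable def fl2 (n : ℕ) : ℕ := ⌊phi ^ 2 * n⌋₊

def FMove (p q : ℕ × ℕ) : Prop :=
  ∃ a b x y : ℕ, a ≤ b ∧ x ≤ y ∧ (p = (a, b) ∨ p = (b, a)) ∧ (q = (x, y) ∨ q = (y, x)) ∧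
    ((x = a ∧ y < b) ∨ (x < a ∧ y = b) ∨ (x < a ∧ y = a) ∨
      (∃ k, 1 ≤ k ∧ k < a ∧ (b - k) / (a - k) = b / a ∧ x = a - k ∧ y = b - k))

theorem fMove_lt {p q : ℕ × ℕ} (h : FMove p q) : q.1 + q.2 < p.1 + p.2 := by
  obtain ⟨a, b, x, y, hab, hxy, hp, hq, hc⟩ := h
  have hps : p.1 + p.2 = a + b := by rcases hp with h | h <;> subst h <;> simp <;> omega
  have hqs : q.1 + q.2 = x + y := by rcases hq with h | h <;> subst h <;> simp <;> omega
  rw [hps, hqs]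
  rcases hc with ⟨h1, h2⟩ | ⟨h1, h2⟩ | ⟨h1, h2⟩ | ⟨k, hk1, hk2, _, h1, h2⟩ <;> omega

def PPos (p : ℕ × ℕ) : Prop := ∀ q, FMove p q → ¬ PPos q
termination_by p.1 + p.2
decreasing_by exact fMove_lt (by assumption)

noncomputable def grundy (p : ℕ × ℕ) : ℕ :=
  sInf {g : ℕ | ∀ q, FMove p q → grundy q ≠ g}
termination_by p.1 + p.2
decreasing_by exact fMove_lt (by assumption)

/-! The positions of value `0` are `(0, 0)` and the Wythoff pairs `(⌊nφ⌋, ⌊nφ²⌋)` translated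
by `1`, and both values are characterized together by induction: a set `P` that no move stays in
and that every other position can move into is the set of value `0`; a set `Q` disjoint from `P`
that no move stays in and that every position outside `P ∪ Q` can move into is then the set of
value `1`.

Both translated families have these properties for the same reasons. Distinct pairs have distinct
smaller coordinates and distinct differences, and by Rayleigh's theorem (the Beatty sequences of
`φ` and `φ²` partition the positive integers) no larger coordinate of one pair is the smaller
coordinate of another, so no move joins two pairs. Conversely, a sorted position `(a, b)` outside
the family with `a` not too small has `a` as the smaller or as the larger coordinate of a pair, and it moves to that pair
by shortening `b`, by dropping to `a`, or by a diagonal move preserving `b - a`, which is legal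
because both ratios lie in `[1, 2)`.
-/

lemma grundy_le_add (p : ℕ × ℕ) : grundy p ≤ p.1 + p.2 := by
  induction hN : p.1 + p.2 using Nat.strong_induction_on generalizing p with
  | _ N ih =>
    rw [grundy]
    refine Nat.sInf_le fun q hq hqN => ?_
    have hlt := fMove_lt hq
    have := ih _ (hN ▸ hlt) q rfl
    omega

lemma grundy_eq_iff {p : ℕ × ℕ} {g : ℕ} :
    grundy p = g ↔
      (∀ q, FMove p q → grundy q ≠ g) ∧ ∀ h < g, ∃ q, FMove p q ∧ grundy q = h := by
  set S := {g : ℕ | ∀ q, FMove p q → grundy q ≠ g}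
  have hS : grundy p = sInf S := by rw [grundy]
  have hmem (h : ℕ) : h ∉ S ↔ ∃ q, FMove p q ∧ grundy q = h := by simp [S]
  simp only [hS, ← hmem]
  constructor
  · rintro rfl
    have hne : S.Nonempty :=
      ⟨p.1 + p.2, fun q hq => ((grundy_le_add q).trans_lt (fMove_lt hq)).ne⟩
    exact ⟨Nat.sInf_mem hne, fun h => Nat.notMem_of_lt_sInf⟩
  · rintro ⟨hg, hlt⟩
    exact IsLeast.csInf_eq ⟨hg, fun h hh => not_lt.mp fun h' => hlt h h' hh⟩

theorem grundy_eq_zero_and_grundy_eq_one_iff {P Q : Set (ℕ × ℕ)}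
    (hP : ∀ p q, FMove p q → p ∈ P → q ∉ P) (hP' : ∀ p ∉ P, ∃ q, FMove p q ∧ q ∈ P)
    (hQ : ∀ p q, FMove p q → p ∈ Q → q ∉ Q) (hQ' : ∀ p ∉ P ∪ Q, ∃ q, FMove p q ∧ q ∈ Q)
    (hPQ : Disjoint P Q) (p : ℕ × ℕ) :
    (grundy p = 0 ↔ p ∈ P) ∧ (grundy p = 1 ↔ p ∈ Q) := by
  induction hN : p.1 + p.2 using Nat.strong_induction_on generalizing p with
  | _ N ih =>
    have ih' (q) (hq : FMove p q) : (grundy q = 0 ↔ q ∈ P) ∧ (grundy q = 1 ↔ q ∈ Q) :=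
      ih _ (hN ▸ fMove_lt hq) q rfl
    have h0 : grundy p = 0 ↔ p ∈ P := by
      simp only [grundy_eq_iff (g := 0), Nat.not_lt_zero, false_imp_iff, implies_true, and_true]
      refine ⟨fun h => by_contra fun hp => ?_, fun hp q hq h => hP p q hq hp ((ih' q hq).1.mp h)⟩
      obtain ⟨q, hq, hqP⟩ := hP' p hp
      exact h q hq ((ih' q hq).1.mpr hqP)
    refine ⟨h0, ?_⟩
    simp only [grundy_eq_iff (g := 1), Nat.lt_one_iff, forall_eq]
    constructor
    · rintro ⟨h1, q, hq, hq0⟩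
      by_contra hp
      have hpP : p ∉ P := fun hpP => hP p q hq hpP ((ih' q hq).1.mp hq0)
      obtain ⟨r, hr, hrQ⟩ := hQ' p (by simp [hpP, hp])
      exact h1 r hr ((ih' r hr).2.mpr hrQ)
    · intro hp
      refine ⟨fun q hq h => hQ p q hq hp ((ih' q hq).2.mp h), ?_⟩
      obtain ⟨q, hq, hqP⟩ := hP' p (hPQ.notMem_of_mem_right hp)
      exact ⟨q, hq, (ih' q hq).1.mpr hqP⟩

lemma phi_eq_goldenRatio : phi = Real.goldenRatio := rfl

lemma one_lt_phi : 1 < phi := Real.one_lt_goldenRatio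

lemma phi_holderConjugate : phi.HolderConjugate (phi ^ 2) := by
  rw [phi_eq_goldenRatio, Real.holderConjugate_iff_eq_conjExponent Real.one_lt_goldenRatio,
    eq_div_iff (sub_ne_zero.mpr Real.one_lt_goldenRatio.ne')]
  linear_combination Real.goldenRatio * Real.goldenRatio_sq

lemma intCast_mem_beattySeq_pos_iff {r : ℝ} (hr : 0 ≤ r) (c : ℕ) :
    (c : ℤ) ∈ {beattySeq r k | k > 0} ↔ ∃ n : ℕ, 0 < n ∧ ⌊r * n⌋₊ = c := by
  constructor
  · rintro ⟨k, hk, hkc⟩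
    lift k to ℕ using hk.le
    refine ⟨k, by exact_mod_cast hk, ?_⟩
    rw [beattySeq, mul_comm, Int.cast_natCast, ← Int.natCast_floor_eq_floor (by positivity)] at hkc
    exact_mod_cast hkc
  · rintro ⟨n, hn, rfl⟩
    refine ⟨n, by exact_mod_cast hn, ?_⟩
    rw [beattySeq, mul_comm, Int.cast_natCast, ← Int.natCast_floor_eq_floor (by positivity)]

lemma fl_zero : fl 0 = 0 := by simp [fl]

lemma fl2_eq_fl_add (n : ℕ) : fl2 n = fl n + n := by
  rw [fl2, fl, phi_eq_goldenRatio, Real.goldenRatio_sq, add_one_mul,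
    Nat.floor_add_natCast (by positivity)]

lemma fl_strictMono : StrictMono fl := by
  refine strictMono_nat_of_lt_succ fun n => Nat.lt_of_succ_le (Nat.le_floor ?_)
  have : (fl n : ℝ) ≤ phi * n := Nat.floor_le (by positivity [one_lt_phi])
  push_cast
  linarith [one_lt_phi]

lemma le_fl (n : ℕ) : n ≤ fl n := fl_strictMono.id_le n

/-- Rayleigh's theorem for the complementary Beatty sequences `⌊nφ⌋` and `⌊nφ²⌋ = ⌊nφ⌋ + n`. -/
lemma xor_fl_eq_fl_add_eq {c : ℕ} (hc : 0 < c) :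
    Xor (∃ n, 0 < n ∧ fl n = c) (∃ m, 0 < m ∧ fl m + m = c) := by
  have h := (Set.ext_iff.mp (Real.goldenRatio_irrational.beattySeq_symmDiff_beattySeq_pos
    phi_holderConjugate) c).mpr (show (0 : ℤ) < c by exact_mod_cast hc)
  simp only [Set.mem_symmDiff, intCast_mem_beattySeq_pos_iff (zero_le_one.trans one_lt_phi.le),
    intCast_mem_beattySeq_pos_iff (sq_nonneg phi)] at h
  simp only [← fl2_eq_fl_add]
  exact h

lemma fl_ne_fl_add {m : ℕ} (hm : 0 < m) (n : ℕ) : fl n ≠ fl m + m := by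
  rintro h
  rcases n.eq_zero_or_pos with rfl | hn
  · rw [fl_zero] at h
    omega
  · have hc : 0 < fl n := fl_zero ▸ fl_strictMono hn
    rcases xor_fl_eq_fl_add_eq hc with ⟨-, hne⟩ | ⟨-, hne⟩
    · exact hne ⟨m, hm, h.symm⟩
    · exact hne ⟨n, hn, rfl⟩

lemma exists_fl_eq_or_fl_add_eq (c : ℕ) : (∃ n, fl n = c) ∨ ∃ m, 0 < m ∧ fl m + m = c := by
  rcases c.eq_zero_or_pos with rfl | hc
  · exact Or.inl ⟨0, fl_zero⟩
  · exact (xor_fl_eq_fl_add_eq hc).or.imp_left fun ⟨n, _, h⟩ => ⟨n, h⟩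

def SortedFMove (a b x y : ℕ) : Prop :=
  (x = a ∧ y < b) ∨ (x < a ∧ y = b) ∨ (x < a ∧ y = a) ∨
    (∃ k, 1 ≤ k ∧ k < a ∧ (b - k) / (a - k) = b / a ∧ x = a - k ∧ y = b - k)

/-- `(0, t)` together with the Wythoff pairs `(⌊nφ⌋, ⌊nφ²⌋)` translated by `t + 1`. -/
def ShiftedWythoff (t a b : ℕ) : Prop :=
  (a = 0 ∧ b = t) ∨ ∃ n, a = fl n + t + 1 ∧ b = fl n + n + t + 1

namespace ShiftedWythoff

variable {t a b x y : ℕ}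

lemma le (h : ShiftedWythoff t a b) : a ≤ b := by
  rcases h with ⟨rfl, rfl⟩ | ⟨n, rfl, rfl⟩ <;> omega

lemma eq_of_eq {t' : ℕ} (h : ShiftedWythoff t a b) (h' : ShiftedWythoff t' a b) : t = t' := by
  rcases h with ⟨ha, hb⟩ | ⟨n, ha, hb⟩ <;> rcases h' with ⟨ha', hb'⟩ | ⟨m, ha', hb'⟩
  all_goals try omega
  obtain rfl : n = m := by omega
  omega

lemma not_sortedFMove (hab : ShiftedWythoff t a b) (hxy : ShiftedWythoff t x y) :
    ¬ SortedFMove a b x y := by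
  rcases hab with ⟨rfl, rfl⟩ | ⟨n, rfl, rfl⟩ <;> rcases hxy with ⟨rfl, rfl⟩ | ⟨m, rfl, rfl⟩ <;>
    rintro (⟨hx, hy⟩ | ⟨hx, hy⟩ | ⟨hx, hy⟩ | ⟨k, hk, hka, -, hx, hy⟩)
  all_goals try omega
  · exact absurd (fl_strictMono (by omega : m < n)) (by omega)
  · exact absurd (fl_strictMono (by omega : n < m)) (by omega)
  · rcases m.eq_zero_or_pos with rfl | hm
    · rw [fl_zero] at hx hy
      omega
    · exact fl_ne_fl_add hm n (by omega)
  · obtain rfl : m = n := by omega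
    omega

lemma exists_sortedFMove (hab : a ≤ b) (ha : t < a) (h : ¬ ShiftedWythoff t a b) :
    ∃ x y, x ≤ y ∧ SortedFMove a b x y ∧ ShiftedWythoff t x y := by
  rcases exists_fl_eq_or_fl_add_eq (a - t - 1) with ⟨n, hn⟩ | ⟨m, hm, hm'⟩
  · rcases lt_trichotomy b (fl n + n + t + 1) with hb | rfl | hb
    · obtain ⟨d, rfl⟩ := Nat.exists_eq_add_of_le hab
      have hfl := fl_strictMono (by omega : d < n)
      have := le_fl d
      have := le_fl n
      refine ⟨fl d + t + 1, fl d + d + t + 1, by omega, ?_, Or.inr ⟨d, rfl, rfl⟩⟩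
      refine Or.inr <| Or.inr <| Or.inr ⟨fl n - fl d, by omega, by omega, ?_, by omega, by omega⟩
      rw [Nat.div_eq_of_lt_le (k := 1) (by omega) (by omega),
        Nat.div_eq_of_lt_le (k := 1) (by omega) (by omega)]
    · exact absurd (Or.inr ⟨n, by omega, rfl⟩) h
    · exact ⟨a, fl n + n + t + 1, by omega, Or.inl ⟨rfl, hb⟩, Or.inr ⟨n, by omega, rfl⟩⟩
  · exact ⟨fl m + t + 1, a, by omega, Or.inr <| Or.inr <| Or.inl ⟨by omega, rfl⟩,
      Or.inr ⟨m, rfl, by omega⟩⟩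

end ShiftedWythoff

def shiftedWythoffSet (t : ℕ) : Set (ℕ × ℕ) :=
  {p | ShiftedWythoff t p.1 p.2 ∨ ShiftedWythoff t p.2 p.1}

lemma swap_mem_shiftedWythoffSet {t a b : ℕ} :
    (b, a) ∈ shiftedWythoffSet t ↔ (a, b) ∈ shiftedWythoffSet t :=
  Or.comm

lemma ShiftedWythoff.of_mem {t a b : ℕ} {p : ℕ × ℕ} (hab : a ≤ b) (hp : p = (a, b) ∨ p = (b, a))
    (h : p ∈ shiftedWythoffSet t) : ShiftedWythoff t a b := by
  rcases hp with rfl | rfl <;> rcases h with h | h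
  all_goals first | exact h | obtain rfl := le_antisymm hab h.le; exact h

lemma not_fMove_shiftedWythoffSet (t : ℕ) (p q : ℕ × ℕ) (h : FMove p q)
    (hp : p ∈ shiftedWythoffSet t) : q ∉ shiftedWythoffSet t := fun hq =>
  let ⟨_, _, _, _, hab, hxy, hpab, hqxy, hm⟩ := h
  (ShiftedWythoff.of_mem hab hpab hp).not_sortedFMove (ShiftedWythoff.of_mem hxy hqxy hq) hm

lemma shiftedWythoffSet_disjoint {t t' : ℕ} (h : t ≠ t') :
    Disjoint (shiftedWythoffSet t) (shiftedWythoffSet t') := by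
  refine Set.disjoint_left.mpr fun ⟨a, b⟩ hp hp' => h ?_
  rcases le_total a b with hab | hba
  · exact (ShiftedWythoff.of_mem hab (Or.inl rfl) hp).eq_of_eq (.of_mem hab (Or.inl rfl) hp')
  · exact (ShiftedWythoff.of_mem hba (Or.inr rfl) hp).eq_of_eq (.of_mem hba (Or.inr rfl) hp')

lemma exists_fMove_mem_shiftedWythoffSet {S : Set (ℕ × ℕ)} {t : ℕ}
    (hS : ∀ a b, (b, a) ∈ S ↔ (a, b) ∈ S)
    (h : ∀ a b, a ≤ b → (a, b) ∉ S → ∃ x y, x ≤ y ∧ SortedFMove a b x y ∧ ShiftedWythoff t x y)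
    (p : ℕ × ℕ) (hp : p ∉ S) : ∃ q, FMove p q ∧ q ∈ shiftedWythoffSet t := by
  obtain ⟨a, b⟩ := p
  rcases le_total a b with hab | hba
  · obtain ⟨x, y, hxy, hm, hT⟩ := h a b hab hp
    exact ⟨(x, y), ⟨a, b, x, y, hab, hxy, Or.inl rfl, Or.inl rfl, hm⟩, Or.inl hT⟩
  · obtain ⟨x, y, hxy, hm, hT⟩ := h b a hba ((hS a b).not.mpr hp)
    exact ⟨(x, y), ⟨b, a, x, y, hba, hxy, Or.inr rfl, Or.inl rfl, hm⟩, Or.inl hT⟩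

lemma exists_sortedFMove_shiftedWythoff_zero {a b : ℕ} (hab : a ≤ b)
    (h : ¬ ShiftedWythoff 0 a b) :
    ∃ x y, x ≤ y ∧ SortedFMove a b x y ∧ ShiftedWythoff 0 x y := by
  rcases a.eq_zero_or_pos with rfl | ha
  · exact ⟨0, 0, le_rfl, Or.inl ⟨rfl, Nat.pos_of_ne_zero fun hb => h (Or.inl ⟨rfl, hb⟩)⟩,
      Or.inl ⟨rfl, rfl⟩⟩
  · exact ShiftedWythoff.exists_sortedFMove hab ha h

lemma exists_sortedFMove_shiftedWythoff_one {a b : ℕ} (hab : a ≤ b)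
    (h0 : ¬ ShiftedWythoff 0 a b) (h1 : ¬ ShiftedWythoff 1 a b) :
    ∃ x y, x ≤ y ∧ SortedFMove a b x y ∧ ShiftedWythoff 1 x y := by
  rcases lt_or_ge 1 a with ha | ha
  · exact ShiftedWythoff.exists_sortedFMove hab ha h1
  have hb : 1 < b := by
    by_contra hb
    interval_cases a <;> interval_cases b
    · exact h0 (Or.inl ⟨rfl, rfl⟩)
    · exact h1 (Or.inl ⟨rfl, rfl⟩)
    · exact h0 (Or.inr ⟨0, by simp [fl_zero], by simp [fl_zero]⟩)
  refine ⟨0, 1, zero_le_one, ?_, Or.inl ⟨rfl, rfl⟩⟩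
  interval_cases a
  · exact Or.inl ⟨rfl, hb⟩
  · exact Or.inr <| Or.inr <| Or.inl ⟨one_pos, rfl⟩

theorem grundy_eq_one_iff_mem_shiftedWythoffSet (p : ℕ × ℕ) :
    grundy p = 1 ↔ p ∈ shiftedWythoffSet 1 := by
  refine (grundy_eq_zero_and_grundy_eq_one_iff (not_fMove_shiftedWythoffSet 0) ?_
    (not_fMove_shiftedWythoffSet 1) ?_ (shiftedWythoffSet_disjoint zero_ne_one) p).2
  · exact exists_fMove_mem_shiftedWythoffSet (fun _ _ => swap_mem_shiftedWythoffSet)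
      fun a b hab hp => exists_sortedFMove_shiftedWythoff_zero hab (hp ∘ Or.inl)
  · refine exists_fMove_mem_shiftedWythoffSet
      (fun _ _ => by simp only [Set.mem_union, swap_mem_shiftedWythoffSet]) fun a b hab hp => ?_
    exact exists_sortedFMove_shiftedWythoff_one hab (fun h => hp (.inl (.inl h)))
      (fun h => hp (.inr (.inl h)))

theorem stmt14 (p : ℕ × ℕ) :
    grundy p = 1 ↔ p ∈ {p : ℕ × ℕ | p = (0, 1) ∨ p = (1, 0) ∨ ∃ n : ℕ, p = (fl n + 2, fl2 n + 2) ∨ p = (fl2 n + 2, fl n + 2)} := by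
  rw [grundy_eq_one_iff_mem_shiftedWythoffSet]
  obtain ⟨a, b⟩ := p
  simp only [shiftedWythoffSet, ShiftedWythoff, fl2_eq_fl_add, Set.mem_ofPred_eq, Prod.mk.injEq]
  grind
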